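/- arXiv:quant-ph/0610267 — 6 statements merged into one kernel-verified Lean document; each statement's English description precedes it below -/
import Mathlib

section
/- Let g_1, …, g_k be pairwise commuting elements of the n-qupit Pauli group, g_i = ω^{c_i} X(𝐚^i)Z(𝐛^i), such that the vectors (𝐚^1, 𝐛^1), …, (𝐚^k, 𝐛^k) ∈ F_p^{2n} are linearly independent over F_p. For i ∈ {1, …, k} and j ∈ {0, …, p−1} set P_{ij} = (1/p) Σ_{l=0}^{p−1} ω^{−jl} g_i^l. Then for any two tuples (j_1, …, j_k) and (j'_1, …, j'_k), the products P_{1 j_1} P_{2 j_2} ⋯ P_{k j_k} and P_{1 j'_1} P_{2 j'_2} ⋯ P_{k j'_k} have the same rank. -/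
open Matrix Complex

/-- `ω = exp(2πi/p)`. -/
noncomputable def ω (p : ℕ) : ℂ := Complex.exp (2 * Real.pi * Complex.I / p)

/-- The `n`-qupit Pauli matrix `X(𝐚)` on `(ℂ^p)^⊗n`, with `X(𝐚)|x⟩ = |x+𝐚⟩`. -/
noncomputable def XmatN (p n : ℕ) (a : Fin n → ZMod p) :
    Matrix (Fin n → ZMod p) (Fin n → ZMod p) ℂ :=
  fun y x => if y = x + a then 1 else 0

/-- The `n`-qupit Pauli matrix `Z(𝐛)` on `(ℂ^p)^⊗n`, with `Z(𝐛)|x⟩ = ω^{𝐛·x}|x⟩`. -/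
noncomputable def ZmatN (p n : ℕ) (b : Fin n → ZMod p) :
    Matrix (Fin n → ZMod p) (Fin n → ZMod p) ℂ :=
  Matrix.diagonal fun x => ω p ^ (b ⬝ᵥ x).val
/-- The operator `P_j = (1/p) Σ_{l=0}^{p−1} ω^{−jl} g^l`. -/
noncomputable def projMat (p : ℕ) {V : Type*} [Fintype V] [DecidableEq V]
    (g : Matrix V V ℂ) (j : ℕ) : Matrix V V ℂ :=
  (1 / (p : ℂ)) • ∑ l ∈ Finset.range p, ω p ^ (-(j * l : ℤ)) • g ^ l

lemma omega_ne_zero (p : ℕ) : ω p ≠ 0 := Complex.exp_ne_zero _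

lemma omega_pow_p (p : ℕ) [Fact p.Prime] : ω p ^ p = 1 :=
  (Complex.isPrimitiveRoot_exp p (Fact.out : p.Prime).ne_zero).pow_eq_one

lemma omega_zpow_eq (p : ℕ) [Fact p.Prime] {m m' : ℤ} (h : (m : ZMod p) = (m' : ZMod p)) :
    ω p ^ m = ω p ^ m' := by
  obtain ⟨d, hd⟩ : (p:ℤ) ∣ (m - m') :=
    (ZMod.intCast_zmod_eq_zero_iff_dvd (m - m') p).mp (by push_cast; rw [h]; ring)
  have hm : m = m' + p * d := by linarith
  have h1 : ω p ^ (p : ℤ) = 1 := by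
    rw [zpow_natCast]; exact omega_pow_p p
  rw [hm, zpow_add₀ (omega_ne_zero p), _root_.zpow_mul, h1, _root_.one_zpow, mul_one]

lemma omega_pow_eq (p : ℕ) [Fact p.Prime] {m m' : ℕ} (h : (m : ZMod p) = (m' : ZMod p)) :
    ω p ^ m = ω p ^ m' := by
  have := omega_zpow_eq p (m := m) (m' := m') (by push_cast; exact_mod_cast h)
  simpa [zpow_natCast] using this

lemma omega_val_add (p : ℕ) [Fact p.Prime] (u v : ZMod p) :
    ω p ^ (u + v).val = ω p ^ u.val * ω p ^ v.val := by
  haveI : NeZero p := ⟨(Fact.out : p.Prime).ne_zero⟩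
  rw [← pow_add]
  apply omega_pow_eq
  push_cast [ZMod.natCast_val, ZMod.cast_id]; ring

lemma Xmul (p n : ℕ) [Fact p.Prime] (a a' : Fin n → ZMod p) :
    XmatN p n a * XmatN p n a' = XmatN p n (a + a') := by
  ext y x
  simp only [XmatN, Matrix.mul_apply, ite_mul, one_mul, zero_mul, mul_ite]
  rw [Finset.sum_eq_single (x + a')]
  · simp [add_assoc, add_comm a' a]
  · intro z _ hz; simp [hz]
  · simp

lemma X_zero (p n : ℕ) [Fact p.Prime] : XmatN p n 0 = 1 := by
  ext y x; simp [XmatN, Matrix.one_apply, eq_comm]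

lemma Zmul (p n : ℕ) [Fact p.Prime] (b b' : Fin n → ZMod p) :
    ZmatN p n b * ZmatN p n b' = ZmatN p n (b + b') := by
  simp only [ZmatN, Matrix.diagonal_mul_diagonal]
  have : (fun i => ω p ^ (b ⬝ᵥ i).val * ω p ^ (b' ⬝ᵥ i).val)
      = fun x => ω p ^ ((b + b') ⬝ᵥ x).val := by
    funext x; rw [add_dotProduct, omega_val_add]
  rw [this]

lemma Z_zero (p n : ℕ) [Fact p.Prime] : ZmatN p n 0 = 1 := by
  simp [ZmatN, Matrix.diagonal_one]

lemma ZX (p n : ℕ) [Fact p.Prime] (b a : Fin n → ZMod p) :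
    ZmatN p n b * XmatN p n a = ω p ^ (b ⬝ᵥ a).val • (XmatN p n a * ZmatN p n b) := by
  ext y x
  simp only [ZmatN, XmatN, Matrix.smul_apply, Matrix.diagonal_mul, Matrix.mul_diagonal,
    smul_eq_mul]
  by_cases h : y = x + a
  · subst h
    simp only [if_pos rfl, mul_one, one_mul]
    rw [dotProduct_add, omega_val_add]; ring
  · simp [h]

lemma X_isUnit (p n : ℕ) [Fact p.Prime] (a : Fin n → ZMod p) : IsUnit (XmatN p n a) :=
  ⟨⟨XmatN p n a, XmatN p n (-a),
    by rw [Xmul, add_neg_cancel, X_zero], by rw [Xmul, neg_add_cancel, X_zero]⟩, rfl⟩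

lemma Z_isUnit (p n : ℕ) [Fact p.Prime] (b : Fin n → ZMod p) : IsUnit (ZmatN p n b) :=
  ⟨⟨ZmatN p n b, ZmatN p n (-b),
    by rw [Zmul, add_neg_cancel, Z_zero], by rw [Zmul, neg_add_cancel, Z_zero]⟩, rfl⟩

lemma W_conj_g (p n : ℕ) [Fact p.Prime] (cc : ZMod p) (a b x z : Fin n → ZMod p) :
    (XmatN p n x * ZmatN p n z) * (ω p ^ cc.val • (XmatN p n a * ZmatN p n b))
      = ω p ^ (z ⬝ᵥ a - b ⬝ᵥ x).val •
        ((ω p ^ cc.val • (XmatN p n a * ZmatN p n b)) * (XmatN p n x * ZmatN p n z)) := by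
  have h1 : (XmatN p n x * ZmatN p n z) * (XmatN p n a * ZmatN p n b)
      = ω p ^ (z ⬝ᵥ a).val • (XmatN p n (x + a) * ZmatN p n (z + b)) := by
    calc (XmatN p n x * ZmatN p n z) * (XmatN p n a * ZmatN p n b)
        = XmatN p n x * (ZmatN p n z * XmatN p n a) * ZmatN p n b := by
          rw [mul_assoc, mul_assoc, mul_assoc]
      _ = ω p ^ (z ⬝ᵥ a).val • (XmatN p n x * (XmatN p n a * ZmatN p n z) * ZmatN p n b) := by
          rw [ZX]; rw [Matrix.mul_smul, Matrix.smul_mul]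
      _ = ω p ^ (z ⬝ᵥ a).val • (XmatN p n (x + a) * ZmatN p n (z + b)) := by
          rw [← mul_assoc, Xmul, mul_assoc, Zmul]
  have h2 : (XmatN p n a * ZmatN p n b) * (XmatN p n x * ZmatN p n z)
      = ω p ^ (b ⬝ᵥ x).val • (XmatN p n (x + a) * ZmatN p n (z + b)) := by
    calc (XmatN p n a * ZmatN p n b) * (XmatN p n x * ZmatN p n z)
        = XmatN p n a * (ZmatN p n b * XmatN p n x) * ZmatN p n z := by
          rw [mul_assoc, mul_assoc, mul_assoc]
      _ = ω p ^ (b ⬝ᵥ x).val • (XmatN p n a * (XmatN p n x * ZmatN p n b) * ZmatN p n z) := by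
          rw [ZX]; rw [Matrix.mul_smul, Matrix.smul_mul]
      _ = ω p ^ (b ⬝ᵥ x).val • (XmatN p n (x + a) * ZmatN p n (z + b)) := by
          rw [← mul_assoc, Xmul, mul_assoc, Zmul, add_comm a x, add_comm b z]
  have hsc : ω p ^ (z ⬝ᵥ a).val
      = ω p ^ (z ⬝ᵥ a - b ⬝ᵥ x).val * ω p ^ (b ⬝ᵥ x).val := by
    rw [← omega_val_add, sub_add_cancel]
  rw [Matrix.mul_smul, Matrix.smul_mul, h1, h2, hsc]
  rw [smul_smul, smul_smul, smul_smul]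
  congr 1
  ring

lemma W_conj_pow {V : Type*} [Fintype V] [DecidableEq V]
    (W g : Matrix V V ℂ) (μ : ℂ) (h : W * g = μ • (g * W)) (l : ℕ) :
    W * g ^ l = μ ^ l • (g ^ l * W) := by
  induction l with
  | zero => simp
  | succ l ih =>
    rw [pow_succ, pow_succ, ← mul_assoc, ih, Matrix.smul_mul, mul_assoc, h,
      Matrix.mul_smul, smul_smul, ← mul_assoc]

lemma W_conj_proj (p : ℕ) [Fact p.Prime] {V : Type*} [Fintype V] [DecidableEq V]
    (W g : Matrix V V ℂ) (t : ZMod p) (hWg : W * g = ω p ^ t.val • (g * W))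
    (j j' : ℕ) (hjj : (j' : ZMod p) = (j : ZMod p) - t) :
    W * projMat p g j = projMat p g j' * W := by
  unfold projMat
  rw [Matrix.mul_smul, Matrix.smul_mul, Matrix.mul_sum, Finset.sum_mul]
  congr 1
  apply Finset.sum_congr rfl
  intro l _
  rw [Matrix.mul_smul, W_conj_pow W g _ hWg l, Matrix.smul_mul, smul_smul]
  congr 1
  rw [← pow_mul, ← zpow_natCast (ω p) (t.val * l), ← zpow_add₀ (omega_ne_zero p)]
  apply omega_zpow_eq
  haveI : NeZero p := ⟨(Fact.out : p.Prime).ne_zero⟩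
  push_cast [ZMod.natCast_val, ZMod.cast_id, hjj]
  ring

lemma conj_list {V : Type*} [Fintype V] [DecidableEq V] {k : ℕ}
    (W : Matrix V V ℂ) (A B : Fin k → Matrix V V ℂ)
    (h : ∀ i, W * A i = B i * W) :
    W * (List.ofFn A).prod = (List.ofFn B).prod * W := by
  induction k with
  | zero => simp
  | succ k ih =>
    rw [List.ofFn_succ, List.ofFn_succ, List.prod_cons, List.prod_cons,
      ← mul_assoc, h 0, mul_assoc,
      ih (fun i => A i.succ) (fun i => B i.succ) (fun i => h i.succ), ← mul_assoc]

noncomputable def sympMap (p n k : ℕ) (a b : Fin k → Fin n → ZMod p) :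
    ((Fin n → ZMod p) × (Fin n → ZMod p)) →ₗ[ZMod p] (Fin k → ZMod p) :=
  LinearMap.pi fun i =>
    { toFun := fun v => v.2 ⬝ᵥ a i - b i ⬝ᵥ v.1
      map_add' := by intro u v; simp [add_dotProduct, dotProduct_add]; ring
      map_smul' := by intro r v; simp [smul_dotProduct, dotProduct_smul, smul_eq_mul]; ring }

lemma sympMap_apply (p n k : ℕ) (a b : Fin k → Fin n → ZMod p)
    (v : (Fin n → ZMod p) × (Fin n → ZMod p)) (i : Fin k) :
    sympMap p n k a b v i = v.2 ⬝ᵥ a i - b i ⬝ᵥ v.1 := rfl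

lemma sympMap_surjective (p n k : ℕ) [Fact p.Prime] (a b : Fin k → Fin n → ZMod p)
    (hind : LinearIndependent (ZMod p) (fun i : Fin k => (a i, b i))) :
    Function.Surjective (sympMap p n k a b) := by
  rw [← LinearMap.dualMap_injective_iff]
  rw [injective_iff_map_eq_zero]
  intro ψ hψ
  have hψ' : ∀ v, ψ (sympMap p n k a b v) = 0 := by
    intro v
    have := LinearMap.congr_fun hψ v
    simpa using this
  set d : Fin k → ZMod p := fun i => ψ (Pi.single i 1) with hd
  have hψeval : ∀ u : Fin k → ZMod p, ψ u = ∑ i, u i * d i := by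
    intro u
    conv_lhs => rw [← Finset.univ_sum_single u]
    rw [map_sum]
    apply Finset.sum_congr rfl
    intro i _
    have h1 : Pi.single i (u i) = u i • (Pi.single i 1 : Fin k → ZMod p) := by
      funext m
      by_cases hm : m = i <;> simp [Pi.single_apply, hm]
    rw [h1, LinearMap.map_smul, smul_eq_mul, hd]
  have ha : ∀ m, ∑ i, d i * a i m = 0 := by
    intro m
    have h0 := hψ' ((0 : Fin n → ZMod p), Pi.single m 1)
    rw [hψeval] at h0
    simp only [sympMap_apply, single_dotProduct, one_mul,
      dotProduct_zero, sub_zero] at h0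
    rw [← h0]
    exact Finset.sum_congr rfl fun i _ => by ring
  have hb : ∀ m, ∑ i, d i * b i m = 0 := by
    intro m
    have h0 := hψ' ((Pi.single m 1 : Fin n → ZMod p), 0)
    rw [hψeval] at h0
    simp only [sympMap_apply, dotProduct_single, mul_one,
      zero_dotProduct, zero_sub] at h0
    have h1 : ∑ i, d i * b i m = ∑ i, -(-(b i m) * d i) :=
      Finset.sum_congr rfl fun i _ => by ring
    rw [h1, Finset.sum_neg_distrib, h0, neg_zero]
  have hsum : ∑ i, d i • ((a i, b i) : (Fin n → ZMod p) × (Fin n → ZMod p)) = 0 := by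
    apply Prod.ext
    · rw [Prod.fst_sum]
      simp only [Prod.smul_fst, Prod.fst_zero]
      funext m
      rw [Finset.sum_apply]
      simpa [mul_comm] using ha m
    · rw [Prod.snd_sum]
      simp only [Prod.smul_snd, Prod.snd_zero]
      funext m
      rw [Finset.sum_apply]
      simpa [mul_comm] using hb m
  have hd0 := Fintype.linearIndependent_iff.mp hind d hsum
  apply LinearMap.ext
  intro u
  rw [hψeval]
  simp [hd0]


/-- Let `g_1, …, g_k` be pairwise commuting `n`-qupit Pauli operators
`g_i = ω^{c_i} X(𝐚^i)Z(𝐛^i)` whose check vectors `(𝐚^i, 𝐛^i)` are linearly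
independent over `F_p`, and let `P_{ij} = (1/p) Σ_{l<p} ω^{−jl} g_i^l`. Then any
two products `P_{1j_1}⋯P_{kj_k}` and `P_{1j'_1}⋯P_{kj'_k}` have the same rank. -/
theorem stmt9 (p n k : ℕ) [Fact p.Prime] (hodd : Odd p)
    (c : Fin k → ZMod p) (a b : Fin k → Fin n → ZMod p)
    (g : Fin k → Matrix (Fin n → ZMod p) (Fin n → ZMod p) ℂ)
    (hg : ∀ i, g i = ω p ^ (c i).val • (XmatN p n (a i) * ZmatN p n (b i)))
    (hcomm : ∀ i j, Commute (g i) (g j))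
    (hind : LinearIndependent (ZMod p) (fun i : Fin k => (a i, b i)))
    (j j' : Fin k → ℕ) (hj : ∀ i, j i < p) (hj' : ∀ i, j' i < p) :
    ((List.ofFn fun i => projMat p (g i) (j i)).prod).rank
      = ((List.ofFn fun i => projMat p (g i) (j' i)).prod).rank := by
  obtain ⟨⟨x, z⟩, hv⟩ := sympMap_surjective p n k a b hind
    (fun i => (j i : ZMod p) - (j' i : ZMod p))
  have hWunit : IsUnit (XmatN p n x * ZmatN p n z) := (X_isUnit p n x).mul (Z_isUnit p n z)
  have hconj : ∀ i, (XmatN p n x * ZmatN p n z) * projMat p (g i) (j i)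
      = projMat p (g i) (j' i) * (XmatN p n x * ZmatN p n z) := by
    intro i
    apply W_conj_proj p _ (g i) (z ⬝ᵥ a i - b i ⬝ᵥ x)
    · rw [hg i]
      exact W_conj_g p n (c i) (a i) (b i) x z
    · have h2 : sympMap p n k a b (x, z) i = (j i : ZMod p) - (j' i : ZMod p) :=
        congrFun hv i
      rw [sympMap_apply] at h2
      rw [h2]; ring
  have hprod := conj_list (XmatN p n x * ZmatN p n z)
    (fun i => projMat p (g i) (j i)) (fun i => projMat p (g i) (j' i)) hconj
  have hdet : IsUnit (XmatN p n x * ZmatN p n z).det :=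
    (Matrix.isUnit_iff_isUnit_det _).mp hWunit
  calc ((List.ofFn fun i => projMat p (g i) (j i)).prod).rank
      = ((XmatN p n x * ZmatN p n z) * (List.ofFn fun i => projMat p (g i) (j i)).prod).rank :=
        (Matrix.rank_mul_eq_right_of_isUnit_det _ _ hdet).symm
    _ = ((List.ofFn fun i => projMat p (g i) (j' i)).prod * (XmatN p n x * ZmatN p n z)).rank := by
        rw [hprod]
    _ = ((List.ofFn fun i => projMat p (g i) (j' i)).prod).rank :=
        Matrix.rank_mul_eq_left_of_isUnit_det _ _ hdet
end

section
/- Let A be an n×2n matrix over F_p of rank n whose rows are pairwise orthogonal with respect to the symplectic inner product. Then there exist an invertible n×n matrix U over F_p and a local symplectic 2n×2n matrix Y over F_p such that UAY = (I_n | M), where M is a symmetric n×n matrix over F_p with zero diagonal. (Equivalently: every stabilizer state is equivalent to a graph state under the local Clifford group.) -/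
open Matrix

/-- The symplectic inner product on `F_p^{2n}`:
`⟨(𝐚, 𝐛), (𝐚', 𝐛')⟩ = 𝐚·𝐛' − 𝐛·𝐚'`, where the first (resp. last) `n` coordinates
of a vector are indexed by `Sum.inl` (resp. `Sum.inr`). -/
def sympProd (p n : ℕ) (v w : Fin n ⊕ Fin n → ZMod p) : ZMod p :=
  ∑ i, v (Sum.inl i) * w (Sum.inr i) - ∑ i, v (Sum.inr i) * w (Sum.inl i)

/-- A `2n×2n` matrix over `F_p` is local symplectic if it has the block form
`[[E, F], [E', F']]` with `E, F, E', F'` diagonal and `e_i f'_i − f_i e'_i = 1`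
for every `i`. -/
def IsLocalSymplectic (p n : ℕ)
    (Y : Matrix (Fin n ⊕ Fin n) (Fin n ⊕ Fin n) (ZMod p)) : Prop :=
  ∃ e f e' f' : Fin n → ZMod p,
    (∀ i, e i * f' i - f i * e' i = 1) ∧
    Y = Matrix.fromBlocks (Matrix.diagonal e) (Matrix.diagonal f)
          (Matrix.diagonal e') (Matrix.diagonal f')

section Aux

variable {K : Type*} [Field K] {n : ℕ}

lemma mem_span_single (S : Set (Fin n)) (v : Fin n → K) (h : ∀ j ∉ S, v j = 0) :
    v ∈ Submodule.span K ((fun j => Pi.single j (1 : K)) '' S) := by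
  classical
  have hv : v = ∑ j : Fin n, v j • (Pi.single j 1 : Fin n → K) := by
    funext k
    simp [Finset.sum_apply, Pi.single_apply, Finset.sum_ite_eq', mul_comm]
  rw [hv]
  refine Submodule.sum_mem _ fun j _ => ?_
  by_cases hj : j ∈ S
  · exact Submodule.smul_mem _ _ (Submodule.subset_span ⟨j, hj, rfl⟩)
  · simp [h j hj]

lemma exists_coord_compl (W : Submodule K (Fin n → K)) :
    ∃ S : Set (Fin n),
      Disjoint W (Submodule.span K ((fun j => Pi.single j (1 : K)) '' S)) ∧
      W ⊔ Submodule.span K ((fun j => Pi.single j (1 : K)) '' S) = ⊤ := by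
  classical
  obtain ⟨b, hbW, hspanb, hlib⟩ := exists_linearIndependent K (W : Set (Fin n → K))
  have hspanb' : Submodule.span K b = W := by rw [hspanb, Submodule.span_eq]
  set t : Set (Fin n → K) := b ∪ Set.range (fun j => Pi.single j (1 : K)) with ht
  have hbt : b ⊆ t := Set.subset_union_left
  obtain ⟨B, hBt, hbB, hBtop, hliB⟩ := exists_linearIndepOn_id_extension hlib hbt
  have hspanB : Submodule.span K B = ⊤ := by
    rw [eq_top_iff]
    intro v _
    have hv : v ∈ Submodule.span K ((fun j => Pi.single j (1 : K)) '' (Set.univ : Set (Fin n))) :=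
      mem_span_single _ v (fun j hj => absurd (Set.mem_univ j) hj)
    rw [Set.image_univ] at hv
    exact Submodule.span_le.2 (fun x hx => hBtop (Set.mem_union_right _ hx)) hv
  set C : Set (Fin n → K) := B \ b with hC
  set S : Set (Fin n) := {j | Pi.single j (1 : K) ∈ C} with hS
  have hCS : C = (fun j => Pi.single j (1 : K)) '' S := by
    apply Set.eq_of_subset_of_subset
    · intro x hx
      rcases hBt hx.1 with hxb | ⟨j, rfl⟩
      · exact absurd hxb hx.2
      · exact ⟨j, hx, rfl⟩
    · rintro x ⟨j, hj, rfl⟩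
      exact hj
  refine ⟨S, ?_, ?_⟩
  · rw [← hCS, ← hspanb']
    have hdisj : Disjoint (((↑) : B → (Fin n → K)) ⁻¹' b) (((↑) : B → (Fin n → K)) ⁻¹' C) :=
      Disjoint.preimage _ disjoint_sdiff_self_right
    have := LinearIndependent.disjoint_span_image (v := ((↑) : B → (Fin n → K))) hliB hdisj
    rwa [Subtype.image_preimage_coe, Subtype.image_preimage_coe,
      Set.inter_eq_right.2 hbB, Set.inter_eq_right.2 Set.diff_subset] at this
  · rw [← hCS, ← hspanb', ← Submodule.span_union, Set.union_diff_cancel hbB, hspanB]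

end Aux

/-- Every stabilizer state is equivalent to a graph state under the local Clifford
group: if `A` is an `n×2n` matrix over `F_p` of rank `n` with pairwise
symplectically orthogonal rows, then `UAY = (I_n | M)` for some invertible `U`,
local symplectic `Y`, and symmetric `M` with zero diagonal. -/
theorem stmt14 (p n : ℕ) [Fact p.Prime] (hodd : Odd p)
    (A : Matrix (Fin n) (Fin n ⊕ Fin n) (ZMod p))
    (hA : A.rank = n)
    (horth : ∀ i j, sympProd p n (A i) (A j) = 0) :
    ∃ (U : Matrix (Fin n) (Fin n) (ZMod p))
      (Y : Matrix (Fin n ⊕ Fin n) (Fin n ⊕ Fin n) (ZMod p))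
      (M : Matrix (Fin n) (Fin n) (ZMod p)),
      IsUnit U ∧ IsLocalSymplectic p n Y ∧ M.IsSymm ∧ (∀ i, M i i = 0) ∧
      U * A * Y = Matrix.fromCols 1 M := by
  classical
  -- rows of A are linearly independent
  have hrows : ∀ u : Fin n → ZMod p, u ᵥ* A = 0 → u = 0 := by
    have hrk : Aᵀ.rank = n := by rw [Matrix.rank_transpose, hA]
    have hr2 : Module.finrank (ZMod p) ↥(LinearMap.range (Matrix.mulVecLin Aᵀ)) = n := hrk
    have hker : LinearMap.ker (Matrix.mulVecLin Aᵀ) = ⊥ := by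
      have h1 := LinearMap.finrank_range_add_finrank_ker (Matrix.mulVecLin Aᵀ)
      rw [hr2, Module.finrank_pi, Fintype.card_fin] at h1
      have h2 : Module.finrank (ZMod p) ↥(LinearMap.ker (Matrix.mulVecLin Aᵀ)) = 0 := by omega
      exact Submodule.finrank_eq_zero.mp h2
    intro u hu
    have hmem : u ∈ LinearMap.ker (Matrix.mulVecLin Aᵀ) := by
      simp [LinearMap.mem_ker, Matrix.mulVecLin_apply, Matrix.mulVec_transpose, hu]
    rw [hker, Submodule.mem_bot] at hmem
    exact hmem
  -- block notation helpers
  have hvl : ∀ (w : Fin n → ZMod p) j, (w ᵥ* A.toCols₁) j = (w ᵥ* A) (Sum.inl j) := by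
    intro w j; simp [Matrix.vecMul, dotProduct, Matrix.toCols₁]
  have hvr : ∀ (w : Fin n → ZMod p) j, (w ᵥ* A.toCols₂) j = (w ᵥ* A) (Sum.inr j) := by
    intro w j; simp [Matrix.vecMul, dotProduct, Matrix.toCols₂]
  -- symmetry of A₁ A₂ᵀ
  have hsym : A.toCols₁ * A.toCols₂ᵀ = A.toCols₂ * A.toCols₁ᵀ := by
    ext i k
    have h := horth i k
    rw [sympProd, sub_eq_zero] at h
    simpa [Matrix.mul_apply, Matrix.toCols₁, Matrix.toCols₂] using h
  have hisoV : ∀ u u' : Fin n → ZMod p,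
      (u ᵥ* A.toCols₁) ⬝ᵥ (u' ᵥ* A.toCols₂)
        = (u ᵥ* A.toCols₂) ⬝ᵥ (u' ᵥ* A.toCols₁) := by
    intro u u'
    rw [show u' ᵥ* A.toCols₂ = A.toCols₂ᵀ *ᵥ u' from (Matrix.mulVec_transpose _ u').symm,
      show u' ᵥ* A.toCols₁ = A.toCols₁ᵀ *ᵥ u' from (Matrix.mulVec_transpose _ u').symm,
      dotProduct_mulVec, dotProduct_mulVec,
      Matrix.vecMul_vecMul, Matrix.vecMul_vecMul, hsym]
  -- the subspaces T and W
  let ext : (Fin n → ZMod p) →ₗ[ZMod p] (Fin n ⊕ Fin n → ZMod p) :=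
    { toFun := fun t => Sum.elim 0 t
      map_add' := fun a b => by funext x; cases x <;> simp
      map_smul' := fun c a => by funext x; cases x <;> simp }
  set V : Submodule (ZMod p) (Fin n ⊕ Fin n → ZMod p) := LinearMap.range A.vecMulLinear with hV
  set T : Submodule (ZMod p) (Fin n → ZMod p) := Submodule.comap ext V with hT
  let W : Submodule (ZMod p) (Fin n → ZMod p) :=
    { carrier := {w | ∀ t ∈ T, w ⬝ᵥ t = 0}
      add_mem' := fun ha hb t ht => by
        rw [add_dotProduct, ha t ht, hb t ht, add_zero]
      zero_mem' := fun t ht => zero_dotProduct t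
      smul_mem' := fun c w hw t ht => by
        rw [smul_dotProduct, hw t ht, smul_zero] }
  have hmemW : ∀ x, x ∈ W ↔ ∀ t ∈ T, x ⬝ᵥ t = 0 := fun x => Iff.rfl
  obtain ⟨S, hdis, hsup⟩ := exists_coord_compl W
  -- the key vanishing property
  have hkey : ∀ u : Fin n → ZMod p,
      (∀ j ∉ S, (u ᵥ* A) (Sum.inl j) = 0) → (∀ j ∈ S, (u ᵥ* A) (Sum.inr j) = 0) → u = 0 := by
    intro u hl hr
    have haW : (u ᵥ* A.toCols₁) ∈ W := by
      rw [hmemW]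
      intro t ht
      rw [hT, Submodule.mem_comap, hV, LinearMap.mem_range] at ht
      obtain ⟨u', hu'⟩ := ht
      rw [Matrix.vecMulLinear_apply] at hu'
      have h10 : u' ᵥ* A.toCols₁ = 0 := by
        funext j
        rw [hvl, hu']; rfl
      have h2t : u' ᵥ* A.toCols₂ = t := by
        funext j
        rw [hvr, hu']; rfl
      calc (u ᵥ* A.toCols₁) ⬝ᵥ t
          = (u ᵥ* A.toCols₁) ⬝ᵥ (u' ᵥ* A.toCols₂) := by rw [h2t]
        _ = (u ᵥ* A.toCols₂) ⬝ᵥ (u' ᵥ* A.toCols₁) := hisoV u u'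
        _ = 0 := by rw [h10, dotProduct_zero]
    have haS : (u ᵥ* A.toCols₁) ∈
        Submodule.span (ZMod p) ((fun j => Pi.single j (1 : ZMod p)) '' S) :=
      mem_span_single S _ (fun j hj => by rw [hvl]; exact hl j hj)
    have ha0 : u ᵥ* A.toCols₁ = 0 :=
      Submodule.disjoint_def.mp hdis _ haW haS
    have hainl : ∀ j, (u ᵥ* A) (Sum.inl j) = 0 := by
      intro j
      rw [← hvl, ha0]; rfl
    set tv : Fin n → ZMod p := fun j => (u ᵥ* A) (Sum.inr j) with htv
    have hvT : tv ∈ T := by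
      rw [hT, Submodule.mem_comap, hV, LinearMap.mem_range]
      refine ⟨u, ?_⟩
      rw [Matrix.vecMulLinear_apply]
      funext x
      cases x with
      | inl j => exact (hainl j).symm ▸ (hainl j)
      | inr j => rfl
    have htv0 : tv = 0 := by
      let Z : Submodule (ZMod p) (Fin n → ZMod p) :=
        { carrier := {w | tv ⬝ᵥ w = 0}
          add_mem' := fun ha hb => by
            simp only [Set.mem_setOf_eq] at *
            rw [dotProduct_add, ha, hb, add_zero]
          zero_mem' := dotProduct_zero tv
          smul_mem' := fun c w hw => by
            simp only [Set.mem_setOf_eq] at *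
            rw [dotProduct_smul, hw, smul_zero] }
      have hmemZ : ∀ x, x ∈ Z ↔ tv ⬝ᵥ x = 0 := fun x => Iff.rfl
      have hWZ : W ≤ Z := by
        intro w hw
        rw [hmemZ, dotProduct_comm]
        exact (hmemW w).mp hw tv hvT
      have hSZ : Submodule.span (ZMod p) ((fun j => Pi.single j (1 : ZMod p)) '' S) ≤ Z := by
        rw [Submodule.span_le]
        rintro x ⟨j, hj, rfl⟩
        rw [SetLike.mem_coe, hmemZ, dotProduct_single, mul_one]
        exact hr j hj
      have hZtop : ∀ w, tv ⬝ᵥ w = 0 := by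
        intro w
        have : w ∈ W ⊔ Submodule.span (ZMod p) ((fun j => Pi.single j (1 : ZMod p)) '' S) := by
          rw [hsup]; trivial
        exact (hmemZ w).mp (sup_le hWZ hSZ this)
      funext j
      have := hZtop (Pi.single j 1)
      rwa [dotProduct_single, mul_one] at this
    apply hrows
    funext x
    cases x with
    | inl j => exact hainl j
    | inr j => exact congrFun htv0 j
  -- local symplectic data
  set ε : Fin n → ZMod p := fun j => if j ∈ S then 0 else 1 with hε
  set φ : Fin n → ZMod p := fun j => if j ∈ S then 1 else 0 with hφ
  set ε' : Fin n → ZMod p := fun j => -φ j with hε'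
  set B₁ : Matrix (Fin n) (Fin n) (ZMod p) :=
    A.toCols₁ * Matrix.diagonal ε + A.toCols₂ * Matrix.diagonal ε' with hB₁def
  set B₂ : Matrix (Fin n) (Fin n) (ZMod p) :=
    A.toCols₁ * Matrix.diagonal φ + A.toCols₂ * Matrix.diagonal ε with hB₂def
  have hwB₁ : ∀ (w : Fin n → ZMod p) j,
      (w ᵥ* B₁) j = (w ᵥ* A) (Sum.inl j) * ε j + (w ᵥ* A) (Sum.inr j) * ε' j := by
    intro w j
    rw [hB₁def, Matrix.vecMul_add, Pi.add_apply, ← Matrix.vecMul_vecMul, ← Matrix.vecMul_vecMul,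
      Matrix.vecMul_diagonal, Matrix.vecMul_diagonal, hvl, hvr]
  -- B₁ is invertible
  have hB₁unit : IsUnit B₁ := by
    rw [← Matrix.vecMul_injective_iff_isUnit]
    intro x y hxy
    have hxy' : x ᵥ* B₁ = y ᵥ* B₁ := hxy
    have hsub : (x - y) ᵥ* B₁ = 0 := by
      rw [Matrix.sub_vecMul, hxy', sub_self]
    have h0 : x - y = 0 := by
      apply hkey
      · intro j hj
        have h := congrFun hsub j
        rw [hwB₁] at h
        simpa [hε, hφ, hε', hj] using h
      · intro j hj
        have h := congrFun hsub j
        rw [hwB₁] at h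
        simpa [hε, hφ, hε', hj] using h
    exact sub_eq_zero.mp h0
  have hB₁det : IsUnit B₁.det := (Matrix.isUnit_iff_isUnit_det B₁).mp hB₁unit
  -- B₁ B₂ᵀ is symmetric
  have hsymB : B₁ * B₂ᵀ = B₂ * B₁ᵀ := by
    ext i k
    have hsum : ∀ j, B₁ i j * B₂ k j - B₂ i j * B₁ k j
        = A i (Sum.inl j) * A k (Sum.inr j) - A i (Sum.inr j) * A k (Sum.inl j) := by
      intro j
      by_cases hj : j ∈ S <;>
        simp [hB₁def, hB₂def, hε, hφ, hε', Matrix.add_apply, Matrix.mul_diagonal,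
          Matrix.toCols₁, Matrix.toCols₂, hj] <;> ring
    have h0 := horth i k
    rw [sympProd, ← Finset.sum_sub_distrib] at h0
    rw [← sub_eq_zero, Matrix.mul_apply, Matrix.mul_apply, ← Finset.sum_sub_distrib]
    simp only [Matrix.transpose_apply]
    calc ∑ j, (B₁ i j * B₂ k j - B₂ i j * B₁ k j)
        = ∑ j, (A i (Sum.inl j) * A k (Sum.inr j) - A i (Sum.inr j) * A k (Sum.inl j)) :=
          Finset.sum_congr rfl fun j _ => hsum j
      _ = 0 := h0
  set N : Matrix (Fin n) (Fin n) (ZMod p) := B₁⁻¹ * B₂ with hN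
  have hNsym : Nᵀ = N := by
    have hB₁tdet : IsUnit B₁ᵀ.det := by rwa [Matrix.det_transpose]
    have h1 : B₁ * Nᵀ = B₂ := by
      rw [hN, Matrix.transpose_mul, Matrix.transpose_nonsing_inv, ← Matrix.mul_assoc,
        hsymB, Matrix.mul_assoc, Matrix.mul_nonsing_inv _ hB₁tdet, Matrix.mul_one]
    calc Nᵀ = B₁⁻¹ * (B₁ * Nᵀ) := by
            rw [← Matrix.mul_assoc, Matrix.nonsing_inv_mul _ hB₁det, Matrix.one_mul]
      _ = B₁⁻¹ * B₂ := by rw [h1]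
      _ = N := hN.symm
  set g : Fin n → ZMod p := fun i => -(N i i) with hg
  refine ⟨B₁⁻¹,
    Matrix.fromBlocks (Matrix.diagonal ε) (Matrix.diagonal fun i => ε i * g i + φ i)
      (Matrix.diagonal ε') (Matrix.diagonal fun i => ε' i * g i + ε i),
    Matrix.diagonal g + N, ?_, ?_, ?_, ?_, ?_⟩
  · exact Matrix.isUnit_nonsing_inv_iff.mpr hB₁unit
  · refine ⟨ε, (fun i => ε i * g i + φ i), ε', (fun i => ε' i * g i + ε i), ?_, rfl⟩
    intro i
    by_cases hi : i ∈ S <;> simp [hε, hφ, hε', hi] <;> ring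
  · rw [Matrix.IsSymm, Matrix.transpose_add, Matrix.diagonal_transpose, hNsym]
  · intro i
    simp [hg, Matrix.add_apply, Matrix.diagonal_apply_eq]
  · rw [Matrix.mul_assoc, ← Matrix.fromCols_toCols A,
      Matrix.fromCols_mul_fromBlocks, Matrix.mul_fromCols]
    have e1 : B₁⁻¹ * (A.toCols₁ * Matrix.diagonal ε + A.toCols₂ * Matrix.diagonal ε') = 1 := by
      rw [← hB₁def]; exact Matrix.nonsing_inv_mul _ hB₁det
    rw [e1]
    have hexp : A.toCols₁ * Matrix.diagonal (fun i => ε i * g i + φ i)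
          + A.toCols₂ * Matrix.diagonal (fun i => ε' i * g i + ε i)
          = B₁ * Matrix.diagonal g + B₂ := by
        rw [hB₁def, hB₂def, add_mul, Matrix.mul_assoc, Matrix.mul_assoc,
          Matrix.diagonal_mul_diagonal, Matrix.diagonal_mul_diagonal,
          ← Matrix.diagonal_add, ← Matrix.diagonal_add, mul_add, mul_add]
        abel
    rw [hexp, mul_add, ← Matrix.mul_assoc, Matrix.nonsing_inv_mul _ hB₁det,
      Matrix.one_mul, ← hN]
end

section
/- Let M and N be symmetric n×n matrices over F_p with zero diagonal (label matrices of F_p-labeled graphs G and H on vertices 1, …, n). Then the following are equivalent: (i) there exist an invertible n×n matrix U over F_p and a local symplectic 2n×2n matrix Y over F_p such that (I_n | N) = U (I_n | M) Y; (ii) N can be obtained from M by a finite sequence of operations of the form M ↦ M ∘_b v (with v a vertex and 0 ≠ b ∈ F_p) and M ↦ M *_a v (with v a vertex and a ∈ F_p). (This expresses that the graph states of G and H are equivalent under the local Clifford group if and only if one graph is obtained from the other by a sequence of ∘ and * operations.) -/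
open Matrix

/-- The operation `M ∘_b v = I(v,b) M I(v,b)`, where `I(v,b)` is diagonal with
entry `b` at position `v` and `1` elsewhere. -/
def circOp (p n : ℕ) (M : Matrix (Fin n) (Fin n) (ZMod p)) (v : Fin n) (b : ZMod p) :
    Matrix (Fin n) (Fin n) (ZMod p) :=
  Matrix.diagonal (Function.update (1 : Fin n → ZMod p) v b) * M *
    Matrix.diagonal (Function.update (1 : Fin n → ZMod p) v b)

/-- The operation `M *_a v`: `(M *_a v)_{jk} = M_{jk} + a·M_{vj}·M_{vk}` for `j ≠ k`,
with zero diagonal. -/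
def starOp (p n : ℕ) (M : Matrix (Fin n) (Fin n) (ZMod p)) (v : Fin n) (a : ZMod p) :
    Matrix (Fin n) (Fin n) (ZMod p) :=
  Matrix.of fun j k => if j = k then 0 else M j k + a * M v j * M v k

/-- One step: apply some `∘_b v` (with `b ≠ 0`) or some `*_a v` operation. -/
def GraphStep (p n : ℕ) (M N : Matrix (Fin n) (Fin n) (ZMod p)) : Prop :=
  (∃ (v : Fin n) (b : ZMod p), b ≠ 0 ∧ N = circOp p n M v b) ∨
    (∃ (v : Fin n) (a : ZMod p), N = starOp p n M v a)

section Star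
variable {p n : ℕ} (M : Matrix (Fin n) (Fin n) (ZMod p)) (w : Fin n) (a : ZMod p)

/-- rank-one piece of the `U` matrix realizing a star operation -/
def starA : Matrix (Fin n) (Fin n) (ZMod p) :=
  Matrix.of fun j k => if k = w then a * M w j else 0

lemma starA_mul (X : Matrix (Fin n) (Fin n) (ZMod p)) :
    starA M w a * X = Matrix.of fun j k => a * M w j * X w k := by
  ext j k
  simp [starA, Matrix.mul_apply, ite_mul, zero_mul, mul_assoc]

variable (hM : ∀ i j, M i j = M j i) (hMd : ∀ i, M i i = 0)

include hMd in
lemma starA_mul_starA : starA M w a * starA M w a = 0 := by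
  rw [starA_mul]
  ext j k
  simp [starA, hMd]

include hMd in
lemma starK_mul_starU : (1 - starA M w a) * (1 + starA M w a) = 1 := by
  have h : (1 - starA M w a) * (1 + starA M w a) = 1 - starA M w a * starA M w a := by
    noncomm_ring
  rw [h, starA_mul_starA M w a hMd, sub_zero]

include hMd in
lemma starU_mul_starK : (1 + starA M w a) * (1 - starA M w a) = 1 := by
  have h : (1 + starA M w a) * (1 - starA M w a) = 1 - starA M w a * starA M w a := by
    noncomm_ring
  rw [h, starA_mul_starA M w a hMd, sub_zero]

include hM hMd in
lemma star_eq1 :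
    (1 + starA M w a) *
      ((1 : Matrix (Fin n) (Fin n) (ZMod p)) +
        M * Matrix.diagonal (fun j => if j = w then -a else 0)) = 1 := by
  rw [add_mul, one_mul, mul_add, mul_one, starA_mul]
  ext j k
  rcases eq_or_ne k w with rfl | hk
  · simp [Matrix.add_apply, Matrix.mul_diagonal, Matrix.of_apply, starA, hMd]
    rw [hM j k]; ring
  · simp [Matrix.add_apply, Matrix.mul_diagonal, Matrix.of_apply, starA, hk]

include hMd in
lemma star_eq2 :
    (1 + starA M w a) *
      (Matrix.diagonal (fun j => -a * (M w j)^2) + M) = starOp p n M w a := by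
  rw [add_mul, one_mul, starA_mul]
  ext j k
  rcases eq_or_ne j k with rfl | hjk
  · simp [starOp, Matrix.add_apply, Matrix.diagonal_apply, Matrix.of_apply, hMd]
    rcases eq_or_ne j w with rfl | hjw
    · simp [hMd]
    · ring
  · rcases eq_or_ne k w with rfl | hkw
    · simp [starOp, Matrix.add_apply, Matrix.diagonal_apply, Matrix.of_apply, hjk, hMd]
    · simp [starOp, Matrix.add_apply, Matrix.diagonal_apply, Matrix.of_apply, hjk, hkw,
        Ne.symm hkw]

end Star
section More
variable {p n : ℕ} (M : Matrix (Fin n) (Fin n) (ZMod p)) (w : Fin n) (a : ZMod p)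
variable (hM : ∀ i j, M i j = M j i) (hMd : ∀ i, M i i = 0)

include hM hMd in
lemma star_transfer (x y : Fin n → ZMod p) :
    Matrix.diagonal (fun j => x j + a * (M w j)^2 * y j) +
      starOp p n M w a * Matrix.diagonal (fun j => y j + (if j = w then a * x j else 0)) =
    (1 + starA M w a) * (Matrix.diagonal x + M * Matrix.diagonal y) := by
  rw [add_mul, one_mul, starA_mul]
  ext j k
  rcases eq_or_ne j k with rfl | hjk
  · rcases eq_or_ne j w with rfl | hjw
    · simp [starOp, Matrix.add_apply, Matrix.mul_diagonal, Matrix.diagonal_apply,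
        Matrix.of_apply, hMd]
    · simp [starOp, Matrix.add_apply, Matrix.mul_diagonal, Matrix.diagonal_apply,
        Matrix.of_apply, hMd, hjw, Ne.symm hjw]
      ring
  · rcases eq_or_ne k w with rfl | hkw
    · simp [starOp, Matrix.add_apply, Matrix.mul_diagonal, Matrix.diagonal_apply,
        Matrix.of_apply, hjk, hMd]
      rw [hM j k]; ring
    · simp [starOp, Matrix.add_apply, Matrix.mul_diagonal, Matrix.diagonal_apply,
        Matrix.of_apply, hjk, hkw, Ne.symm hkw]
      ring

include hMd in
lemma star_det (e f e' f' : Fin n → ZMod p) (hdet : ∀ i, e i * f' i - f i * e' i = 1) :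
    ∀ i, (e i + a * (M w i)^2 * e' i) * (f' i + (if i = w then a * f i else 0))
        - (f i + a * (M w i)^2 * f' i) * (e' i + (if i = w then a * e i else 0)) = 1 := by
  intro i
  rcases eq_or_ne i w with rfl | hiw
  · simp [hMd]
    linear_combination hdet i
  · simp only [if_neg hiw, add_zero]
    linear_combination hdet i

include hM in
lemma starOp_symm : ∀ i j, starOp p n M w a i j = starOp p n M w a j i := by
  intro i j
  rcases eq_or_ne i j with rfl | hij
  · rfl
  · simp [starOp, hij, Ne.symm hij]
    rw [hM i j]; ring

lemma starOp_diag : ∀ i, starOp p n M w a i i = 0 := by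
  intro i; simp [starOp]

end More
section Main
variable {p n : ℕ} [Fact p.Prime]

lemma mat_isUnit {A B : Matrix (Fin n) (Fin n) (ZMod p)} (h : A * B = 1) : IsUnit A :=
  (Matrix.isUnit_iff_isUnit_det A).mpr (Matrix.isUnit_det_of_right_inverse h)

lemma upd_mul_upd (v : Fin n) (b : ZMod p) (hb : b ≠ 0) :
    Matrix.diagonal (Function.update (1 : Fin n → ZMod p) v b) *
      Matrix.diagonal (Function.update (1 : Fin n → ZMod p) v b⁻¹) = 1 := by
  rw [Matrix.diagonal_mul_diagonal]
  have h : (fun i => Function.update (1 : Fin n → ZMod p) v b i *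
      Function.update (1 : Fin n → ZMod p) v b⁻¹ i) = fun _ => 1 := by
    funext i
    rcases eq_or_ne i v with rfl | h
    · simp [mul_inv_cancel₀ hb]
    · simp [Function.update_apply, h]
  rw [h]
  exact Matrix.diagonal_one

lemma circOp_apply (M : Matrix (Fin n) (Fin n) (ZMod p)) (v : Fin n) (b : ZMod p) (i j : Fin n) :
    circOp p n M v b i j = Function.update (1 : Fin n → ZMod p) v b i * M i j *
      Function.update (1 : Fin n → ZMod p) v b j := by
  simp [circOp, Matrix.mul_diagonal, Matrix.diagonal_mul]

lemma isLocalSymplectic_mul {Y₁ Y₂ : Matrix (Fin n ⊕ Fin n) (Fin n ⊕ Fin n) (ZMod p)}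
    (h₁ : IsLocalSymplectic p n Y₁) (h₂ : IsLocalSymplectic p n Y₂) :
    IsLocalSymplectic p n (Y₁ * Y₂) := by
  obtain ⟨e₁, f₁, e₁', f₁', hd₁, rfl⟩ := h₁
  obtain ⟨e₂, f₂, e₂', f₂', hd₂, rfl⟩ := h₂
  refine ⟨fun i => e₁ i * e₂ i + f₁ i * e₂' i, fun i => e₁ i * f₂ i + f₁ i * f₂' i,
    fun i => e₁' i * e₂ i + f₁' i * e₂' i, fun i => e₁' i * f₂ i + f₁' i * f₂' i, ?_, ?_⟩
  · intro i
    linear_combination (e₂ i * f₂' i - f₂ i * e₂' i) * hd₁ i + hd₂ i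
  · rw [Matrix.fromBlocks_multiply]
    simp only [Matrix.diagonal_mul_diagonal, Matrix.diagonal_add]

lemma cstar_hmul_eq {l m k : Type*} [Fintype m] (A : Matrix l m (ZMod p)) (B : Matrix m k (ZMod p)) :
    @HMul.hMul (Matrix l m (ZMod p)) (Matrix m k (ZMod p)) (Matrix l k (ZMod p))
      (CStarMatrix.instHMulOfFintypeOfMulOfAddCommMonoid (l := l)) A B = (A * B : Matrix l k (ZMod p)) :=
  rfl

lemma graphStep_rel {M M1 : Matrix (Fin n) (Fin n) (ZMod p)}
    (hM : ∀ i j, M i j = M j i) (hMd : ∀ i, M i i = 0) (h : GraphStep p n M M1) :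
    ∃ (U : Matrix (Fin n) (Fin n) (ZMod p)) (Y : Matrix (Fin n ⊕ Fin n) (Fin n ⊕ Fin n) (ZMod p)), IsUnit U ∧ IsLocalSymplectic p n Y ∧
      Matrix.fromCols 1 M1 = U * Matrix.fromCols 1 M * Y := by
  rcases h with ⟨v, b, hb, rfl⟩ | ⟨w, a, rfl⟩
  · refine ⟨Matrix.diagonal (Function.update (1 : Fin n → ZMod p) v b),
      Matrix.fromBlocks (Matrix.diagonal (Function.update (1 : Fin n → ZMod p) v b⁻¹)) 0 0
        (Matrix.diagonal (Function.update (1 : Fin n → ZMod p) v b)),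
      mat_isUnit (upd_mul_upd v b hb), ?_, ?_⟩
    · refine ⟨Function.update (1 : Fin n → ZMod p) v b⁻¹, fun _ => 0, fun _ => 0,
        Function.update (1 : Fin n → ZMod p) v b, ?_,
        by simp only [Matrix.diagonal_zero]⟩
      intro i
      rcases eq_or_ne i v with rfl | h
      · simp [inv_mul_cancel₀ hb]
      · simp [Function.update_apply, h]
    · rw [Matrix.mul_fromCols, cstar_hmul_eq, Matrix.fromCols_mul_fromBlocks]
      rw [Matrix.fromCols_ext_iff]
      constructor
      · simp only [Matrix.mul_zero, add_zero, Matrix.mul_one, upd_mul_upd v b hb]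
      · simp only [Matrix.mul_zero, Matrix.mul_one, zero_add]
        rfl
  · refine ⟨1 + starA M w a,
      Matrix.fromBlocks 1 (Matrix.diagonal fun j => -a * (M w j)^2)
        (Matrix.diagonal fun j => if j = w then -a else 0) 1,
      mat_isUnit (starU_mul_starK M w a hMd), ?_, ?_⟩
    · refine ⟨fun _ => 1, fun j => -a * (M w j)^2, fun j => if j = w then -a else 0,
        fun _ => 1, ?_, by rw [show Matrix.diagonal (fun _ => (1 : ZMod p)) = 1 from
          Matrix.diagonal_one]⟩
      intro i
      rcases eq_or_ne i w with rfl | h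
      · simp [hMd]
      · simp [h]
    · rw [Matrix.mul_fromCols, cstar_hmul_eq, Matrix.fromCols_mul_fromBlocks]
      rw [Matrix.fromCols_ext_iff]
      constructor
      · have h := star_eq1 M w a hM hMd
        rw [mul_add, mul_one, ← mul_assoc] at h
        simp only [Matrix.mul_one]
        exact h.symm
      · have h := star_eq2 M w a hMd
        rw [mul_add] at h
        simp only [Matrix.mul_one]
        exact h.symm

end Main
section Main2
variable {p n : ℕ} [Fact p.Prime]

lemma isLocalSymplectic_one : IsLocalSymplectic p n 1 :=
  ⟨fun _ => 1, fun _ => 0, fun _ => 0, fun _ => 1, by simp,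
    by rw [Matrix.diagonal_one, Matrix.diagonal_zero, Matrix.fromBlocks_one]⟩

lemma rel_trans {M N P : Matrix (Fin n) (Fin n) (ZMod p)}
    (h₁ : ∃ (U : Matrix (Fin n) (Fin n) (ZMod p)) (Y : Matrix (Fin n ⊕ Fin n) (Fin n ⊕ Fin n) (ZMod p)), IsUnit U ∧ IsLocalSymplectic p n Y ∧
      Matrix.fromCols 1 N = U * Matrix.fromCols 1 M * Y)
    (h₂ : ∃ (U : Matrix (Fin n) (Fin n) (ZMod p)) (Y : Matrix (Fin n ⊕ Fin n) (Fin n ⊕ Fin n) (ZMod p)), IsUnit U ∧ IsLocalSymplectic p n Y ∧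
      Matrix.fromCols 1 P = U * Matrix.fromCols 1 N * Y) :
    ∃ (U : Matrix (Fin n) (Fin n) (ZMod p)) (Y : Matrix (Fin n ⊕ Fin n) (Fin n ⊕ Fin n) (ZMod p)), IsUnit U ∧ IsLocalSymplectic p n Y ∧
      Matrix.fromCols 1 P = U * Matrix.fromCols 1 M * Y := by
  obtain ⟨U₁, Y₁, hU₁, hY₁, e₁⟩ := h₁
  obtain ⟨U₂, Y₂, hU₂, hY₂, e₂⟩ := h₂
  exact ⟨U₂ * U₁, Y₁ * Y₂, hU₂.mul hU₁, isLocalSymplectic_mul hY₁ hY₂, by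
    rw [e₂, e₁]; simp only [cstar_hmul_eq, Matrix.mul_assoc]⟩

lemma step_preserves {A B : Matrix (Fin n) (Fin n) (ZMod p)} (h : GraphStep p n A B)
    (hs : ∀ i j, A i j = A j i) (hd : ∀ i, A i i = 0) :
    (∀ i j, B i j = B j i) ∧ (∀ i, B i i = 0) := by
  rcases h with ⟨v, b, hb, rfl⟩ | ⟨w, a, rfl⟩
  · constructor
    · intro i j
      rw [circOp_apply, circOp_apply, hs i j]; ring
    · intro i
      rw [circOp_apply, hd i]; ring
  · exact ⟨starOp_symm A w a hs, starOp_diag A w a⟩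

lemma diag_reachable (M : Matrix (Fin n) (Fin n) (ZMod p)) (d : Fin n → ZMod p)
    (hd : ∀ i, d i ≠ 0) :
    Relation.ReflTransGen (GraphStep p n) M
      (Matrix.diagonal d * M * Matrix.diagonal d) := by
  suffices h : ∀ s : Finset (Fin n), Relation.ReflTransGen (GraphStep p n) M
      (Matrix.diagonal (fun i => if i ∈ s then d i else 1) * M *
        Matrix.diagonal (fun i => if i ∈ s then d i else 1)) by
    simpa using h Finset.univ
  intro s
  induction s using Finset.induction_on with
  | empty => simpa using Relation.ReflTransGen.refl
  | @insert v s hv ih =>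
    refine ih.tail (Or.inl ⟨v, d v, hd v, ?_⟩)
    have hfun1 : (fun i => Function.update (1 : Fin n → ZMod p) v (d v) i *
        (if i ∈ s then d i else 1)) = (fun i => if i ∈ insert v s then d i else 1) := by
      funext i
      rcases eq_or_ne i v with rfl | h
      · simp [hv]
      · simp [Function.update_apply, h]
    have hfun2 : (fun i => (if i ∈ s then d i else 1) *
        Function.update (1 : Fin n → ZMod p) v (d v) i) =
        (fun i => if i ∈ insert v s then d i else 1) := by
      funext i
      rcases eq_or_ne i v with rfl | h
      · simp [hv]
      · simp [Function.update_apply, h]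
    have key1 : Matrix.diagonal (Function.update (1 : Fin n → ZMod p) v (d v)) *
        Matrix.diagonal (fun i => if i ∈ s then d i else 1) =
        Matrix.diagonal (fun i => if i ∈ insert v s then d i else 1) := by
      rw [Matrix.diagonal_mul_diagonal, hfun1]
    have key2 : Matrix.diagonal (fun i => if i ∈ s then d i else 1) *
        Matrix.diagonal (Function.update (1 : Fin n → ZMod p) v (d v)) =
        Matrix.diagonal (fun i => if i ∈ insert v s then d i else 1) := by
      rw [Matrix.diagonal_mul_diagonal, hfun2]
    rw [circOp]
    nth_rewrite 1 [← key1]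
    rw [← key2]
    simp only [Matrix.mul_assoc]

/-- measure for the induction -/
def meas (e e' : Fin n → ZMod p) : ℕ :=
  2 * (Finset.univ.filter fun i => e' i ≠ 0).card +
    (if ∃ i, e' i ≠ 0 ∧ e i ≠ 0 then 0 else 1)

lemma key_lemma (N : Matrix (Fin n) (Fin n) (ZMod p)) (hNd : ∀ i, N i i = 0) :
    ∀ μ : ℕ, ∀ M : Matrix (Fin n) (Fin n) (ZMod p), ∀ e f e' f' : Fin n → ZMod p,
      ∀ U : Matrix (Fin n) (Fin n) (ZMod p),
      (∀ i j, M i j = M j i) → (∀ i, M i i = 0) →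
      (∀ i, e i * f' i - f i * e' i = 1) →
      U * (Matrix.diagonal e + M * Matrix.diagonal e') = 1 →
      U * (Matrix.diagonal f + M * Matrix.diagonal f') = N →
      meas e e' ≤ μ →
      Relation.ReflTransGen (GraphStep p n) M N := by
  intro μ
  induction μ with
  | zero =>
    intro M e f e' f' U hM hMd hdet h1 h2 hμ
    exfalso
    unfold meas at hμ
    split_ifs at hμ with h
    · obtain ⟨i, hi, _⟩ := h
      have hmem : i ∈ Finset.univ.filter (fun i => e' i ≠ 0) := by simp [hi]
      have := Finset.card_pos.mpr ⟨i, hmem⟩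
      omega
    · omega
  | succ μ ih =>
    intro M e f e' f' U hM hMd hdet h1 h2 hμ
    by_cases hS : ∀ i, e' i = 0
    · -- base case: Y is upper block triangular
      have he' : Matrix.diagonal e' = 0 := by
        rw [show e' = fun _ => 0 from funext hS, Matrix.diagonal_zero]
      rw [he', Matrix.mul_zero, add_zero] at h1
      have hef : ∀ i, e i * f' i = 1 := by
        intro i
        have := hdet i
        rw [hS i] at this
        simpa using this
      have hf' : ∀ i, f' i ≠ 0 := fun i =>
        (IsUnit.of_mul_eq_one (a := f' i) (e i) (by linear_combination hef i)).ne_zero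
      have hUf : U = Matrix.diagonal f' := by
        have hde : Matrix.diagonal e * Matrix.diagonal f' = 1 := by
          rw [Matrix.diagonal_mul_diagonal,
            show (fun i => e i * f' i) = fun _ => 1 from funext hef]
          exact Matrix.diagonal_one
        calc U = U * (Matrix.diagonal e * Matrix.diagonal f') := by rw [hde, mul_one]
        _ = (U * Matrix.diagonal e) * Matrix.diagonal f' := by rw [mul_assoc]
        _ = Matrix.diagonal f' := by rw [h1, one_mul]
      rw [hUf, mul_add, Matrix.diagonal_mul_diagonal, ← mul_assoc] at h2
      have hf : ∀ i, f i = 0 := by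
        intro i
        have hent := congrFun (congrFun h2 i) i
        rw [Matrix.add_apply, Matrix.diagonal_apply_eq, hNd i] at hent
        rw [Matrix.mul_diagonal, Matrix.diagonal_mul, hMd i, mul_zero, zero_mul,
          add_zero] at hent
        rcases mul_eq_zero.mp hent with h0 | h0
        · exact absurd h0 (hf' i)
        · exact h0
      rw [show (fun i => f' i * f i) = fun _ => (0 : ZMod p) from
        funext fun i => by rw [hf i, mul_zero], Matrix.diagonal_zero, zero_add] at h2
      rw [← h2]
      exact diag_reachable M f' hf'
    · push_neg at hS
      obtain ⟨v, hv⟩ := hS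
      -- generic star-step recursion
      have do_star : ∀ (w : Fin n) (a : ZMod p),
          meas (fun j => e j + a * (M w j)^2 * e' j)
            (fun j => e' j + (if j = w then a * e j else 0)) ≤ μ →
          Relation.ReflTransGen (GraphStep p n) M N := by
        intro w a hm
        have T1 := star_transfer M w a hM hMd e e'
        have T2 := star_transfer M w a hM hMd f f'
        have hKU := starK_mul_starU M w a hMd
        have hA : (U * (1 - starA M w a)) *
            (Matrix.diagonal (fun j => e j + a * (M w j)^2 * e' j) +
              starOp p n M w a *
                Matrix.diagonal (fun j => e' j + (if j = w then a * e j else 0))) = 1 := by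
          rw [T1, ← mul_assoc, mul_assoc U _ _, hKU, mul_one, h1]
        have hB : (U * (1 - starA M w a)) *
            (Matrix.diagonal (fun j => f j + a * (M w j)^2 * f' j) +
              starOp p n M w a *
                Matrix.diagonal (fun j => f' j + (if j = w then a * f j else 0))) = N := by
          rw [T2, ← mul_assoc, mul_assoc U _ _, hKU, mul_one, h2]
        have hdet2 := star_det M w a hMd e f e' f' hdet
        exact Relation.ReflTransGen.head (Or.inr ⟨w, a, rfl⟩)
          (ih (starOp p n M w a) _ _ _ _ (U * (1 - starA M w a))
            (starOp_symm M w a hM) (starOp_diag M w a) hdet2 hA hB hm)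
      by_cases hgood : ∃ w, e' w ≠ 0 ∧ e w ≠ 0
      · obtain ⟨w, hw', hw⟩ := hgood
        refine do_star w (-(e' w) * (e w)⁻¹) ?_
        have hzero : e' w + -(e' w) * (e w)⁻¹ * e w = 0 := by
          rw [mul_assoc, inv_mul_cancel₀ hw, mul_one]
          ring
        have hwmem : w ∈ Finset.univ.filter (fun i => e' i ≠ 0) := by simp [hw']
        have hsubset : (Finset.univ.filter fun i =>
            (e' i + (if i = w then -(e' w) * (e w)⁻¹ * e i else 0)) ≠ 0) ⊆
            (Finset.univ.filter fun i => e' i ≠ 0).erase w := by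
          intro i hi
          rw [Finset.mem_filter] at hi
          rcases eq_or_ne i w with rfl | h
          · rw [if_pos rfl] at hi
            exact absurd hzero hi.2
          · rw [if_neg h, add_zero] at hi
            exact Finset.mem_erase.mpr ⟨h, by simp [hi.2]⟩
        have hcpos := Finset.card_pos.mpr ⟨w, hwmem⟩
        have hcle := Finset.card_le_card hsubset
        rw [Finset.card_erase_of_mem hwmem] at hcle
        have hold : meas e e' ≤ μ + 1 := hμ
        simp only [meas] at hold ⊢
        rw [if_pos ⟨w, hw', hw⟩] at hold
        split_ifs <;> omega
      · push_neg at hgood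
        have hev : e v = 0 := hgood v hv
        have hwex : ∃ w, M v w ≠ 0 ∧ e' w ≠ 0 := by
          by_contra hcon
          push_neg at hcon
          have hrow : ∀ j, (Matrix.diagonal e + M * Matrix.diagonal e') v j = 0 := by
            intro j
            rw [Matrix.add_apply, Matrix.mul_diagonal, Matrix.diagonal_apply]
            rcases eq_or_ne v j with rfl | hj
            · simp [hev, hMd v]
            · rw [if_neg hj, zero_add]
              by_cases hMvj : M v j = 0
              · rw [hMvj, zero_mul]
              · rw [hcon j hMvj, mul_zero]
          have hdz := Matrix.det_eq_zero_of_row_eq_zero v hrow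
          have hKdet := Matrix.isUnit_det_of_right_inverse (mul_eq_one_comm.mp h1)
          rw [hdz] at hKdet
          exact zero_ne_one (isUnit_zero_iff.mp hKdet)
        obtain ⟨w, hvw, hw'⟩ := hwex
        have hvw' : v ≠ w := by rintro rfl; exact hvw (hMd v)
        have hew : e w = 0 := hgood w hw'
        refine do_star w 1 ?_
        have hee : (fun j => e' j + (if j = w then (1 : ZMod p) * e j else 0)) = e' := by
          funext j
          rcases eq_or_ne j w with rfl | h
          · rw [if_pos rfl, hew, mul_zero, add_zero]
          · rw [if_neg h, add_zero]
        rw [hee]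
        have hev2 : e v + 1 * (M w v)^2 * e' v ≠ 0 := by
          rw [hev, zero_add, one_mul]
          exact mul_ne_zero (pow_ne_zero _ (by rw [hM w v]; exact hvw)) hv
        have hold : meas e e' ≤ μ + 1 := hμ
        simp only [meas] at hold ⊢
        rw [if_neg (by push_neg; exact hgood)] at hold
        rw [if_pos ⟨v, hv, hev2⟩]
        omega

end Main2

/-- Two graph states, with label matrices `M, N` (symmetric with zero diagonal),
are equivalent under the local Clifford group — i.e. `(I_n | N) = U (I_n | M) Y`
for some invertible `U` and local symplectic `Y` — if and only if `N` is obtained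
from `M` by a finite sequence of `∘` and `*` operations. -/
theorem stmt15 (p n : ℕ) [Fact p.Prime] (hodd : Odd p)
    (M N : Matrix (Fin n) (Fin n) (ZMod p))
    (hM : M.IsSymm) (hMd : ∀ i, M i i = 0)
    (hN : N.IsSymm) (hNd : ∀ i, N i i = 0) :
    (∃ (U : Matrix (Fin n) (Fin n) (ZMod p))
        (Y : Matrix (Fin n ⊕ Fin n) (Fin n ⊕ Fin n) (ZMod p)),
        IsUnit U ∧ IsLocalSymplectic p n Y ∧
        Matrix.fromCols 1 N = U * Matrix.fromCols 1 M * Y)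
      ↔ Relation.ReflTransGen (GraphStep p n) M N := by
  have hMs : ∀ i j, M i j = M j i := fun i j => congrFun (congrFun hM j) i
  constructor
  · rintro ⟨U, Y, hU, ⟨e, f, e', f', hdet, rfl⟩, hEq⟩
    rw [Matrix.mul_fromCols, cstar_hmul_eq, Matrix.fromCols_mul_fromBlocks,
      Matrix.fromCols_ext_iff] at hEq
    obtain ⟨hEq1, hEq2⟩ := hEq
    rw [Matrix.mul_one] at hEq1 hEq2
    have h1 : U * (Matrix.diagonal e + M * Matrix.diagonal e') = 1 := by
      rw [mul_add, ← mul_assoc]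
      exact hEq1.symm
    have h2 : U * (Matrix.diagonal f + M * Matrix.diagonal f') = N := by
      rw [mul_add, ← mul_assoc]
      exact hEq2.symm
    exact key_lemma N hNd (meas e e') M e f e' f' U hMs hMd hdet h1 h2 le_rfl
  · intro h
    have main : ∀ M' : Matrix (Fin n) (Fin n) (ZMod p),
        Relation.ReflTransGen (GraphStep p n) M' N →
        (∀ i j, M' i j = M' j i) → (∀ i, M' i i = 0) →
        ∃ (U : Matrix (Fin n) (Fin n) (ZMod p)) (Y : Matrix (Fin n ⊕ Fin n) (Fin n ⊕ Fin n) (ZMod p)), IsUnit U ∧ IsLocalSymplectic p n Y ∧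
          Matrix.fromCols 1 N = U * Matrix.fromCols 1 M' * Y := by
      intro M' h'
      induction h' using Relation.ReflTransGen.head_induction_on with
      | refl =>
        intro _ _
        exact ⟨1, 1, isUnit_one, isLocalSymplectic_one, by simp only [cstar_hmul_eq, Matrix.mul_one, Matrix.one_mul]⟩
      | head hstep hrest ih =>
        intro hsym hdiag
        obtain ⟨hsym', hdiag'⟩ := step_preserves hstep hsym hdiag
        exact rel_trans (graphStep_rel hsym hdiag hstep) (ih hsym' hdiag')
    exact main M h hMs hMd
end

section
/- Let M be a symmetric n×n matrix over F_p with zero diagonal, let i be a vertex and let 0 ≠ b ∈ F_p. Let W ⊆ F_p^{2n} be the row space of (I_n | M), let h = (0 | b·δ_i) ∈ F_p^{2n} be the check vector of the measured operator Z_i(b), and let W' = {w ∈ W : ⟨w, h⟩ = 0} + span{h} (the stabilizer, modulo phases, of the state after measuring Z_i(b) on the graph state of M). Then there exists a local symplectic 2n×2n matrix Y over F_p such that W'·Y (the image of W' under right multiplication by Y) equals the row space of (I_n | d(i)M). (This expresses that after measuring Z_i(b), the resulting stabilizer state is equivalent under local Clifford operations to the graph state of d(i)G.) -/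
open Matrix

/-- `d(v)M`: the matrix `M` with its `v`-th row and column replaced by zero. -/
def dmat (p n : ℕ) (M : Matrix (Fin n) (Fin n) (ZMod p)) (v : Fin n) :
    Matrix (Fin n) (Fin n) (ZMod p) :=
  Matrix.of fun j k => if j = v ∨ k = v then 0 else M j k

lemma vecMul_blocks {p n : ℕ} (e f e' f' : Fin n → ZMod p)
    (w : Fin n ⊕ Fin n → ZMod p) :
    Matrix.vecMul w (Matrix.fromBlocks (Matrix.diagonal e) (Matrix.diagonal f)
          (Matrix.diagonal e') (Matrix.diagonal f')) =
    Sum.elim (fun k => w (Sum.inl k) * e k + w (Sum.inr k) * e' k)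
             (fun k => w (Sum.inl k) * f k + w (Sum.inr k) * f' k) := by
  funext j
  cases j with
  | inl k =>
    simp [Matrix.vecMul, dotProduct, Fintype.sum_sum_type, Matrix.fromBlocks,
      Matrix.diagonal, Finset.sum_ite_eq', mul_comm]
  | inr k =>
    simp [Matrix.vecMul, dotProduct, Fintype.sum_sum_type, Matrix.fromBlocks,
      Matrix.diagonal, Finset.sum_ite_eq', mul_comm]

def Ymat (p n : ℕ) (i : Fin n) (b : ZMod p) :
    Matrix (Fin n ⊕ Fin n) (Fin n ⊕ Fin n) (ZMod p) :=
  Matrix.fromBlocks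
    (Matrix.diagonal fun k => if k = i then 0 else 1)
    (Matrix.diagonal fun k => if k = i then -b else 0)
    (Matrix.diagonal fun k => if k = i then b⁻¹ else 0)
    (Matrix.diagonal fun k => if k = i then 0 else 1)

lemma Ymat_h (p n : ℕ) [Fact p.Prime] (M : Matrix (Fin n) (Fin n) (ZMod p))
    (i : Fin n) (b : ZMod p) (hb : b ≠ 0) :
    Matrix.vecMul (Sum.elim (0 : Fin n → ZMod p) fun j => if j = i then b else 0)
      (Ymat p n i b)
    = Matrix.fromCols (1 : Matrix (Fin n) (Fin n) (ZMod p)) (dmat p n M i) i := by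
  rw [Ymat, vecMul_blocks]
  funext k
  cases k with
  | inl k =>
    rcases eq_or_ne k i with hk | hk
    · simp [hk, Matrix.fromCols, Matrix.one_apply, mul_inv_cancel₀ hb]
    · simp [hk, hk.symm, Matrix.fromCols, Matrix.one_apply, Ne.symm hk]
  | inr k =>
    rcases eq_or_ne k i with hk | hk
    · simp [hk, Matrix.fromCols, dmat]
    · simp [hk, Matrix.fromCols, dmat]

lemma Ymat_r (p n : ℕ) [Fact p.Prime] (M : Matrix (Fin n) (Fin n) (ZMod p))
    (hMd : ∀ j, M j j = 0)
    (i : Fin n) (b : ZMod p) (hb : b ≠ 0) (j : Fin n) (hj : j ≠ i) :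
    Matrix.vecMul (Matrix.fromCols 1 M j) (Ymat p n i b)
    = Matrix.fromCols (1 : Matrix (Fin n) (Fin n) (ZMod p)) (dmat p n M i) j
      + (M j i * b⁻¹) •
        Matrix.fromCols (1 : Matrix (Fin n) (Fin n) (ZMod p)) (dmat p n M i) i := by
  rw [Ymat, vecMul_blocks]
  funext k
  cases k with
  | inl k =>
    rcases eq_or_ne k i with hk | hk
    · simp [hk, hj, Matrix.fromCols, Matrix.one_apply]
    · simp [hk, Ne.symm hk, Matrix.fromCols, Matrix.one_apply]
  | inr k =>
    rcases eq_or_ne k i with hk | hk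
    · simp [hk, hj, Matrix.fromCols, dmat, hMd]
    · simp [hk, hj, Ne.symm hk, Matrix.fromCols, dmat]

lemma sympProd_check (p n : ℕ) (i : Fin n) (b : ZMod p) (w : Fin n ⊕ Fin n → ZMod p) :
    sympProd p n w (Sum.elim (0 : Fin n → ZMod p) fun j => if j = i then b else 0)
    = w (Sum.inl i) * b := by
  simp [sympProd, mul_ite, mul_zero, Finset.sum_ite_eq']

lemma row_apply_inl (p n : ℕ) (M : Matrix (Fin n) (Fin n) (ZMod p))
    (c : Fin n → ZMod p) (i : Fin n) :
    (∑ j, c j • Matrix.fromCols 1 M j) (Sum.inl i) = c i := by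
  simp [Finset.sum_apply, Matrix.fromCols, Matrix.one_apply, mul_ite,
    Finset.sum_ite_eq']

/-- Measuring `Z_i(b)` (`b ≠ 0`) on the graph state of `M`: if `W` is the row space
of `(I_n | M)`, `h` the check vector of `Z_i(b)`, and
`W' = {w ∈ W : ⟨w, h⟩ = 0} + span{h}`, then there is a local symplectic `Y` such
that `W'·Y` is the row space of `(I_n | d(i)M)`; i.e. the post-measurement state is
locally Clifford equivalent to the graph state of `d(i)G`. -/
theorem stmt16 (p n : ℕ) [Fact p.Prime] (hodd : Odd p)
    (M : Matrix (Fin n) (Fin n) (ZMod p))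
    (hM : M.IsSymm) (hMd : ∀ j, M j j = 0)
    (i : Fin n) (b : ZMod p) (hb : b ≠ 0) :
    ∃ Y : Matrix (Fin n ⊕ Fin n) (Fin n ⊕ Fin n) (ZMod p),
      IsLocalSymplectic p n Y ∧
      (fun w => Matrix.vecMul w Y) ''
          {x | ∃ w ∈ Submodule.span (ZMod p)
                  (Set.range fun r => Matrix.fromCols 1 M r),
              sympProd p n w
                  (Sum.elim (0 : Fin n → ZMod p) fun j => if j = i then b else 0) = 0 ∧
              ∃ cc : ZMod p,
                x = w + cc •
                  (Sum.elim (0 : Fin n → ZMod p) fun j => if j = i then b else 0)}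
        = ↑(Submodule.span (ZMod p)
            (Set.range fun r : Fin n =>
              Matrix.fromCols (1 : Matrix (Fin n) (Fin n) (ZMod p)) (dmat p n M i) r)) := by
    classical
  refine ⟨Ymat p n i b, ⟨_, _, _, _, ?_, rfl⟩, ?_⟩
  · intro k
    rcases eq_or_ne k i with hk | hk
    · simp [hk, mul_inv_cancel₀ hb]
    · simp [hk]
  · set h : Fin n ⊕ Fin n → ZMod p :=
      Sum.elim (0 : Fin n → ZMod p) fun j => if j = i then b else 0 with hh
    set t : Fin n → (Fin n ⊕ Fin n → ZMod p) :=
      fun j => Matrix.fromCols (1 : Matrix (Fin n) (Fin n) (ZMod p)) (dmat p n M i) j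
      with ht
    ext x
    constructor
    · rintro ⟨z, ⟨w, hw, hsymp, cc, rfl⟩, rfl⟩
      obtain ⟨c, hc⟩ := (Submodule.mem_span_range_iff_exists_fun (ZMod p)).mp hw
      have hci : c i = 0 := by
        have h1 : w (Sum.inl i) * b = 0 := by
          rw [← sympProd_check p n i b w]; exact hsymp
        have h2 : w (Sum.inl i) = c i := by rw [← hc, row_apply_inl]
        rw [h2] at h1
        exact (mul_eq_zero.mp h1).resolve_right hb
      have key : Matrix.vecMul (w + cc • h) (Ymat p n i b)
          = ∑ j, c j • Matrix.vecMul (Matrix.fromCols 1 M j) (Ymat p n i b)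
            + cc • Matrix.vecMul h (Ymat p n i b) := by
        rw [← hc]
        simp [← Matrix.vecMulLinear_apply, map_sum, _root_.map_smul, map_add, -LinearMap.flip_apply, -Matrix.vecMulBilin_apply]
      beta_reduce
      rw [key]
      refine Submodule.add_mem _ (Submodule.sum_mem _ fun j _ => ?_) ?_
      · rcases eq_or_ne j i with hji | hji
        · rw [hji, hci, zero_smul]; exact Submodule.zero_mem _
        · rw [Ymat_r p n M hMd i b hb j hji]
          exact Submodule.smul_mem _ _ (Submodule.add_mem _
            (Submodule.subset_span ⟨j, rfl⟩)
            (Submodule.smul_mem _ _ (Submodule.subset_span ⟨i, rfl⟩)))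
      · rw [Ymat_h p n M i b hb]
        exact Submodule.smul_mem _ _ (Submodule.subset_span ⟨i, rfl⟩)
    · intro hx
      obtain ⟨d, hd⟩ := (Submodule.mem_span_range_iff_exists_fun (ZMod p)).mp hx
      set c : Fin n → ZMod p := fun j => if j = i then 0 else d j with hcdef
      set w : Fin n ⊕ Fin n → ZMod p := ∑ j, c j • Matrix.fromCols 1 M j with hwdef
      refine ⟨w + (d i - ∑ j, c j * (M j i * b⁻¹)) • h,
        ⟨w, Submodule.sum_mem _ fun j _ =>
            Submodule.smul_mem _ _ (Submodule.subset_span ⟨j, rfl⟩), ?_,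
          d i - ∑ j, c j * (M j i * b⁻¹), rfl⟩, ?_⟩
      · rw [sympProd_check, hwdef, row_apply_inl]
        simp [hcdef]
      · have key : Matrix.vecMul (w + (d i - ∑ j, c j * (M j i * b⁻¹)) • h) (Ymat p n i b)
            = ∑ j, c j • Matrix.vecMul (Matrix.fromCols 1 M j) (Ymat p n i b)
              + (d i - ∑ j, c j * (M j i * b⁻¹)) • Matrix.vecMul h (Ymat p n i b) := by
          rw [hwdef]
          simp [← Matrix.vecMulLinear_apply, map_sum, _root_.map_smul, map_add, -LinearMap.flip_apply, -Matrix.vecMulBilin_apply]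
        beta_reduce
        rw [key, Ymat_h p n M i b hb]
        have hsum : ∑ j, c j • Matrix.vecMul (Matrix.fromCols 1 M j) (Ymat p n i b)
            = ∑ j, c j • t j + (∑ j, c j * (M j i * b⁻¹)) • t i := by
          have step : ∀ j ∈ Finset.univ, c j • Matrix.vecMul (Matrix.fromCols 1 M j) (Ymat p n i b)
              = c j • t j + (c j * (M j i * b⁻¹)) • t i := by
            intro j _
            rcases eq_or_ne j i with hji | hji
            · simp [hcdef, hji]
            · rw [Ymat_r p n M hMd i b hb j hji, smul_add, smul_smul]
          rw [Finset.sum_congr rfl step, Finset.sum_add_distrib, ← Finset.sum_smul]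
        rw [hsum]
        have hfin : ∑ j, c j • t j + d i • t i = ∑ j, d j • t j := by
          have : ∀ j ∈ Finset.univ, d j • t j
              = c j • t j + (if j = i then d i • t i else 0) := by
            intro j _
            rcases eq_or_ne j i with hji | hji <;> simp [hcdef, hji]
          rw [Finset.sum_congr rfl this, Finset.sum_add_distrib, Finset.sum_ite_eq']
          simp
        rw [hd] at hfin
        rw [← hfin]
        module
end

section
/- Let Λ be a finite-dimensional vector space over F_p, let 𝓑 be a basis of Λ, and let Γ ⊆ Λ be a nonempty affine subspace of codimension at most 5 (i.e. Γ = x + W for some x ∈ Λ and some linear subspace W ⊆ Λ with dim Λ − dim W ≤ 5). Then there exists a vector u ∈ Γ that is a linear combination of at most five elements of 𝓑 (i.e. u lies in the span of some subset of 𝓑 of size at most 5). -/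
set_option maxHeartbeats 1000000 in
/-- For any basis `𝓑` of a finite-dimensional `F_p`-vector space `Λ` and any
nonempty affine subspace `Γ = x + W` of codimension at most `5`, there is a
vector `u ∈ Γ` that is a linear combination of at most five elements of `𝓑`. -/
theorem stmt18 (p : ℕ) [Fact p.Prime] (hodd : Odd p)
    {Λ : Type*} [AddCommGroup Λ] [Module (ZMod p) Λ] [FiniteDimensional (ZMod p) Λ]
    {ι : Type*} (B : Module.Basis ι (ZMod p) Λ)
    (x : Λ) (W : Submodule (ZMod p) Λ)
    (hcodim : Module.finrank (ZMod p) Λ - Module.finrank (ZMod p) W ≤ 5) :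
    ∃ w ∈ W, ∃ s : Finset ι, s.card ≤ 5 ∧
      x + w ∈ Submodule.span (ZMod p) (⇑B '' ↑s) := by
  classical
  set q := W.mkQ with hq
  -- q x is in the span of the images of the basis
  have hx : q x ∈ Submodule.span (ZMod p) (Set.range (fun i => q (B i))) := by
    have h1 : Submodule.span (ZMod p) (Set.range (fun i => q (B i))) = ⊤ := by
      have : Set.range (fun i => q (B i)) = q '' (Set.range B) := by
        rw [← Set.range_comp]; rfl
      rw [this, ← Submodule.map_span, B.span_eq, Submodule.map_top, Submodule.range_mkQ]
    rw [h1]; trivial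
  obtain ⟨t, hts, hxt⟩ := Submodule.mem_span_finite_of_mem_span hx
  obtain ⟨b, hbt, hspan, hbind⟩ := exists_linearIndependent (ZMod p) (t : Set (Λ ⧸ W))
  have hbfin : b.Finite := t.finite_toSet.subset hbt
  -- card bound
  have hcard : hbfin.toFinset.card ≤ 5 := by
    have h2 : hbfin.toFinset.card ≤ Module.finrank (ZMod p) (Λ ⧸ W) := by
      haveI := hbfin.fintype
      rw [hbfin.card_toFinset]
      exact hbind.fintype_card_le_finrank
    have h3 : Module.finrank (ZMod p) (Λ ⧸ W) =
        Module.finrank (ZMod p) Λ - Module.finrank (ZMod p) W := by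
      have := Submodule.finrank_quotient_add_finrank W
      omega
    omega
  -- choose preimages in ι
  have hpre : ∀ v ∈ hbfin.toFinset, ∃ i : ι, q (B i) = v := by
    intro v hv
    have : v ∈ b := hbfin.mem_toFinset.mp hv
    have := hbt this
    obtain ⟨i, hi⟩ := hts this
    exact ⟨i, hi⟩
  choose f hf using hpre
  set s : Finset ι := hbfin.toFinset.attach.image (fun v => f v.1 v.2) with hs
  have hscard : s.card ≤ 5 := le_trans (Finset.card_image_le.trans (by simp)) hcard
  -- q x ∈ span (q '' (B '' s))
  have hb_sub : b ⊆ q '' (B '' (s : Set ι)) := by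
    intro v hv
    refine ⟨B (f v (hbfin.mem_toFinset.mpr hv)), ⟨f v (hbfin.mem_toFinset.mpr hv), ?_, rfl⟩,
      hf v (hbfin.mem_toFinset.mpr hv)⟩
    simp [hs]
    exact ⟨v, hv, rfl⟩
  have hx2 : q x ∈ Submodule.span (ZMod p) (q '' (B '' (s : Set ι))) := by
    have : q x ∈ Submodule.span (ZMod p) b := by rw [hspan]; exact hxt
    exact Submodule.span_mono hb_sub this
  rw [← Submodule.map_span] at hx2
  obtain ⟨y, hy, hyx⟩ := hx2
  refine ⟨y - x, ?_, s, hscard, ?_⟩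
  · have h0 : q (y - x) = 0 := by rw [map_sub, hyx, sub_self]
    rw [hq, Submodule.mkQ_apply] at h0
    exact (Submodule.Quotient.mk_eq_zero W).mp h0
  · simpa using hy
end

section
/- Let M and N be symmetric n×n matrices over F_p with zero diagonal such that the simple graph on {1, …, n} with an edge {i, j} whenever M_{ij} ≠ 0 is connected, and likewise for N. Let Λ ⊆ (F_pⁿ)⁴ be the space of solutions (E, F, E', F') of the linear system: for all i, j ∈ {1, …, n}, E'·(M_i × N_j) − F'·(M_i × δ_j) + E·(δ_i × N_j) − F·(δ_i × δ_j) = 0, where M_i denotes the i-th row of M, δ_i the i-th standard basis vector, (v × u)_l = v_l u_l is the componentwise product, and · the dot product on F_pⁿ. Suppose there exist an invertible n×n matrix U over F_p and a local symplectic 2n×2n matrix Y over F_p with (I_n | N) = U (I_n | M) Y (i.e. the two graph states are locally equivalent). Then there exists an affine subspace Γ ⊆ Λ with dim Γ ≥ dim Λ − 5 such that every (E, F, E', F') ∈ Γ satisfies E × F' − E' × F = (1, 1, …, 1). -/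
open Matrix

/-- The space `Λ` of solutions `(E, F, E', F')` of the linear system
`E'·(M_i × N_j) − F'·(M_i × δ_j) + E·(δ_i × N_j) − F·(δ_i × δ_j) = 0` (for all
`i, j`), where `×` is the componentwise product and `·` the dot product. -/
def solSpace (p n : ℕ) (M N : Matrix (Fin n) (Fin n) (ZMod p)) :
    Submodule (ZMod p)
      ((Fin n → ZMod p) × (Fin n → ZMod p) × (Fin n → ZMod p) × (Fin n → ZMod p)) where
  carrier := {q | ∀ i j : Fin n,
    q.2.2.1 ⬝ᵥ (M i * N j) - q.2.2.2 ⬝ᵥ (M i * Pi.single j 1)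
      + q.1 ⬝ᵥ (Pi.single i 1 * N j) - q.2.1 ⬝ᵥ (Pi.single i 1 * Pi.single j 1) = 0}
  add_mem' := by
    intro q r hq hr i j
    have h1 := hq i j
    have h2 := hr i j
    simp only [Prod.fst_add, Prod.snd_add, add_dotProduct]
    linear_combination h1 + h2
  zero_mem' := by
    intro i j
    simp
  smul_mem' := by
    intro t q hq i j
    have h1 := hq i j
    simp only [Prod.smul_fst, Prod.smul_snd, smul_dotProduct, smul_eq_mul]
    linear_combination t * h1

lemma mem_solSpace_iff {p n : ℕ} (M N : Matrix (Fin n) (Fin n) (ZMod p)) (hN : N.IsSymm)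
    (a b c d : Fin n → ZMod p) :
    (a, b, c, d) ∈ solSpace p n M N ↔
      (diagonal a + M * diagonal c) * N = diagonal b + M * diagonal d := by
  rw [← Matrix.ext_iff]
  have hmem : (a, b, c, d) ∈ solSpace p n M N ↔ ∀ i j : Fin n,
      c ⬝ᵥ (M i * N j) - d ⬝ᵥ (M i * Pi.single j 1) + a ⬝ᵥ (Pi.single i 1 * N j)
        - b ⬝ᵥ (Pi.single i 1 * Pi.single j 1) = 0 := Iff.rfl
  rw [hmem]
  apply forall_congr'; intro i; apply forall_congr'; intro j
  have e1 : c ⬝ᵥ (M i * N j) = ∑ l, M i l * c l * N l j := by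
    simp only [dotProduct, Pi.mul_apply]
    exact Finset.sum_congr rfl fun l _ => by rw [hN.apply l j]; ring
  have e2 : d ⬝ᵥ (M i * Pi.single j 1) = d j * M i j := by
    simp [dotProduct, Pi.single_apply]
  have e3 : a ⬝ᵥ (Pi.single i 1 * N j) = a i * N i j := by
    have h : a ⬝ᵥ (Pi.single i 1 * N j) = a i * N j i := by
      simp [dotProduct, Pi.single_apply]
    rw [h, hN.apply i j]
  have e4 : b ⬝ᵥ (Pi.single i 1 * Pi.single j 1) = if i = j then b i else 0 := by
    rcases eq_or_ne i j with rfl | hij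
    · simp [dotProduct, Pi.single_apply]
    · simp [dotProduct, Pi.single_apply, hij, Ne.symm hij]
  have e5 : ((diagonal a + M * diagonal c) * N) i j
      = a i * N i j + ∑ l, M i l * c l * N l j := by
    rw [Matrix.add_mul, Matrix.add_apply, Matrix.diagonal_mul]
    congr 1
    rw [Matrix.mul_apply]
    exact Finset.sum_congr rfl fun l _ => by rw [Matrix.mul_diagonal]
  have e6 : (diagonal b + M * diagonal d) i j = (if i = j then b i else 0) + M i j * d j := by
    simp [Matrix.add_apply, Matrix.diagonal_apply, Matrix.mul_diagonal]
  rw [e1, e2, e3, e4, e5, e6]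
  constructor
  · intro h; linear_combination h
  · intro h; linear_combination h

lemma gconst {p n : ℕ} [Fact p.Prime] {M N : Matrix (Fin n) (Fin n) (ZMod p)}
    (hM : M.IsSymm) (hN : N.IsSymm)
    (hMconn : (SimpleGraph.fromRel fun i j : Fin n => M i j ≠ 0).Connected)
    {a b c d : Fin n → ZMod p}
    (h : (diagonal a + M * diagonal c) * N = diagonal b + M * diagonal d)
    (i j : Fin n) :
    a i * d i - c i * b i = a j * d j - c j * b j := by
  have h2 : (diagonal b + M * diagonal d) * (diagonal a + diagonal c * M)
      = (diagonal a + M * diagonal c) * (diagonal b + diagonal d * M) := by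
    have hAt : (diagonal a + M * diagonal c)ᵀ = diagonal a + diagonal c * M := by
      simp only [Matrix.transpose_add, Matrix.transpose_mul, Matrix.diagonal_transpose, hM.eq]
    have hBt : (diagonal b + M * diagonal d)ᵀ = diagonal b + diagonal d * M := by
      simp only [Matrix.transpose_add, Matrix.transpose_mul, Matrix.diagonal_transpose, hM.eq]
    rw [← hAt, ← hBt, ← h, Matrix.transpose_mul, hN.eq, ← Matrix.mul_assoc]
  have key : ∀ k l, (b k * c k - a k * d k) * M k l = M k l * (b l * c l - a l * d l) := by
    intro k l
    have e := Matrix.ext_iff.mpr h2 k l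
    simp only [Matrix.add_mul, Matrix.mul_add, Matrix.add_apply, Matrix.mul_apply,
      Matrix.diagonal_apply, _root_.add_mul, _root_.mul_add, ite_mul, mul_ite, zero_mul,
      mul_zero, Finset.sum_ite_eq, Finset.sum_ite_eq', Finset.mem_univ, if_true,
      Finset.sum_add_distrib] at e
    have hs : ∑ x, M k x * d x * (c x * M x l) = ∑ x, M k x * c x * (d x * M x l) :=
      Finset.sum_congr rfl fun x _ => by ring
    rw [hs] at e
    rcases eq_or_ne k l with rfl | hkl
    · simp only [if_true] at e
      linear_combination e
    · rw [if_neg hkl, if_neg hkl] at e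
      linear_combination e
  have step : ∀ k l : Fin n, M k l ≠ 0 → a k * d k - c k * b k = a l * d l - c l * b l := by
    intro k l hkl
    have h3 : (b k * c k - a k * d k) * M k l = (b l * c l - a l * d l) * M k l := by
      linear_combination key k l
    have h4 := mul_right_cancel₀ hkl h3
    linear_combination -h4
  have walkconst : ∀ {u v : Fin n},
      (SimpleGraph.fromRel fun i j : Fin n => M i j ≠ 0).Walk u v →
      a u * d u - c u * b u = a v * d v - c v * b v := by
    intro u v w
    induction w with
    | nil => rfl
    | cons hadj _ ih =>
      rw [SimpleGraph.fromRel_adj] at hadj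
      rcases hadj.2 with hmz | hmz
      · exact (step _ _ hmz).trans ih
      · exact ((step _ _ hmz).symm).trans ih
  exact ((hMconn.preconnected) i j).elim fun w => walkconst w

/-- Evaluation of a quadruple of vectors at a fixed coordinate, as a linear map. -/
def evalAt (p n : ℕ) (i0 : Fin n) :
    ((Fin n → ZMod p) × (Fin n → ZMod p) × (Fin n → ZMod p) × (Fin n → ZMod p)) →ₗ[ZMod p]
      (ZMod p × ZMod p × ZMod p × ZMod p) where
  toFun q := (q.1 i0, q.2.1 i0, q.2.2.1 i0, q.2.2.2 i0)
  map_add' q r := rfl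
  map_smul' t q := rfl

/-- If the (connected) graph states with label matrices `M` and `N` are locally
equivalent, then there is an affine subspace `Γ = x + W` of the solution space `Λ`
of codimension at most `5` in `Λ`, all of whose elements `(E, F, E', F')` satisfy
`E × F' − E' × F = (1, …, 1)`. -/
theorem stmt19 (p n : ℕ) [Fact p.Prime] (hodd : Odd p)
    (M N : Matrix (Fin n) (Fin n) (ZMod p))
    (hM : M.IsSymm) (hMd : ∀ i, M i i = 0) (hN : N.IsSymm) (hNd : ∀ i, N i i = 0)
    (hMconn : (SimpleGraph.fromRel fun i j : Fin n => M i j ≠ 0).Connected)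
    (hNconn : (SimpleGraph.fromRel fun i j : Fin n => N i j ≠ 0).Connected)
    (hequiv : ∃ (U : Matrix (Fin n) (Fin n) (ZMod p))
        (Y : Matrix (Fin n ⊕ Fin n) (Fin n ⊕ Fin n) (ZMod p)),
        IsUnit U ∧ IsLocalSymplectic p n Y ∧
        Matrix.fromCols 1 N = U * Matrix.fromCols 1 M * Y) :
    ∃ (x : (Fin n → ZMod p) × (Fin n → ZMod p) × (Fin n → ZMod p) × (Fin n → ZMod p))
      (W : Submodule (ZMod p)
        ((Fin n → ZMod p) × (Fin n → ZMod p) × (Fin n → ZMod p) × (Fin n → ZMod p))),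
      x ∈ solSpace p n M N ∧ W ≤ solSpace p n M N ∧
      Module.finrank (ZMod p) (solSpace p n M N) ≤ Module.finrank (ZMod p) W + 5 ∧
      ∀ w ∈ W, (x + w).1 * (x + w).2.2.2 - (x + w).2.2.1 * (x + w).2.1 = 1 := by
  obtain ⟨U, Y, hU, ⟨e, f, e', f', hdet, rfl⟩, heq⟩ := hequiv
  replace heq := heq.trans (Matrix.mul_assoc U (fromCols (1 : Matrix (Fin n) (Fin n) (ZMod p)) M)
      (fromBlocks (diagonal e) (diagonal f) (diagonal e') (diagonal f')))
  rw [Matrix.fromCols_mul_fromBlocks, Matrix.mul_fromCols,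
    Matrix.fromCols_ext_iff] at heq
  obtain ⟨h1, h2⟩ := heq
  rw [Matrix.one_mul] at h1 h2
  have hA1 : (diagonal e + M * diagonal e') * U = 1 := mul_eq_one_comm.mp h1.symm
  have hxM : (diagonal e + M * diagonal e') * N = diagonal f + M * diagonal f' := by
    rw [h2, ← Matrix.mul_assoc, hA1, Matrix.one_mul]
  have hx : ((e, f, e', f')) ∈ solSpace p n M N := (mem_solSpace_iff M N hN e f e' f').mpr hxM
  rcases Nat.eq_zero_or_pos n with hn | hn
  · subst hn
    refine ⟨(e, f, e', f'), ⊥, hx, bot_le, ?_, ?_⟩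
    · have h0 : Module.finrank (ZMod p) (solSpace p 0 M N) = 0 :=
        Module.finrank_zero_of_subsingleton
      omega
    · intro w _
      funext i
      exact absurd i.isLt (by omega)
  · set i0 : Fin n := ⟨0, hn⟩ with hi0
    refine ⟨(e, f, e', f'), solSpace p n M N ⊓ LinearMap.ker (evalAt p n i0), hx,
      inf_le_left, ?_, ?_⟩
    · have hrn := LinearMap.finrank_range_add_finrank_ker (evalAt p n i0)
      have hc : Module.finrank (ZMod p) (ZMod p × ZMod p × ZMod p × ZMod p) = 4 := by
        simp [Module.finrank_prod, Module.finrank_self]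
      have hrange :
          Module.finrank (ZMod p) (LinearMap.range (evalAt p n i0)) ≤ 4 := by
        have := Submodule.finrank_le (LinearMap.range (evalAt p n i0))
        omega
      have hsup := Submodule.finrank_sup_add_finrank_inf_eq (solSpace p n M N)
        (LinearMap.ker (evalAt p n i0))
      have hle := Submodule.finrank_le (solSpace p n M N ⊔ LinearMap.ker (evalAt p n i0))
      omega
    · intro w hw
      obtain ⟨w1, w2, w3, w4⟩ := w
      rw [Submodule.mem_inf] at hw
      obtain ⟨hwS, hwK⟩ := hw
      have hwz := LinearMap.mem_ker.mp hwK
      have hz1 : w1 i0 = 0 := congrArg Prod.fst hwz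
      have hz2 : w2 i0 = 0 := congrArg (fun q => q.2.1) hwz
      have hz3 : w3 i0 = 0 := congrArg (fun q => q.2.2.1) hwz
      have hz4 : w4 i0 = 0 := congrArg (fun q => q.2.2.2) hwz
      have hpe : ((e, f, e', f') + (w1, w2, w3, w4) :
          (Fin n → ZMod p) × (Fin n → ZMod p) × (Fin n → ZMod p) × (Fin n → ZMod p))
          = (e + w1, f + w2, e' + w3, f' + w4) := rfl
      have hq : (e + w1, f + w2, e' + w3, f' + w4) ∈ solSpace p n M N := by
        rw [← hpe]; exact (solSpace p n M N).add_mem hx hwS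
      have hmat := (mem_solSpace_iff M N hN _ _ _ _).mp hq
      have hcon := gconst hM hN hMconn hmat
      funext i
      have h1 := hcon i i0
      simp only [Pi.add_apply, hz1, hz2, hz3, hz4, add_zero] at h1
      show ((e + w1) * (f' + w4) - (e' + w3) * (f + w2)) i = 1
      simp only [Pi.sub_apply, Pi.mul_apply, Pi.add_apply]
      linear_combination h1 + hdet i0
end
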